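/- Let G be a finite connected C4-free Helly graph with radius r, let u and w be mutually far apart vertices (i.e., e(u) = e(w) = dist(u,w)) such that dist(u,w) = diam(G) − 2 = 2r − 3, and let A = L(w, r−2, u). Then a pair of vertices (x,y) is a diametral pair of G if and only if dist(x,A) = dist(y,A) = r − 1, Pr(x,A) ∩ Pr(y,A) = ∅, and dist(y,u) = dist(y,w) = dist(x,u) = dist(x,w) = 2r − 3. -/

import Mathlib

open SimpleGraph

variable {V : Type*}

/-- The ball of radius `r` centered at `v`. -/
def gBall (G : SimpleGraph V) (v : V) (r : ℕ) : Set V := {u | G.dist v u ≤ r}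

/-- A graph is Helly if every (nonempty) family of pairwise intersecting balls
has a nonempty common intersection. -/
def IsHelly (G : SimpleGraph V) : Prop :=
  ∀ F : Set (V × ℕ), F.Nonempty →
    (∀ p ∈ F, ∀ q ∈ F, (gBall G p.1 p.2 ∩ gBall G q.1 q.2).Nonempty) →
    (⋂ p ∈ F, gBall G p.1 p.2).Nonempty

/-- The eccentricity of a vertex. -/
noncomputable def ecc (G : SimpleGraph V) [Fintype V] (v : V) : ℕ :=
  Finset.univ.sup (fun u => G.dist v u)

/-- The radius of a graph. -/
noncomputable def grad (G : SimpleGraph V) [Fintype V] : ℕ :=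
  sInf (Set.range (ecc G))

/-- The diameter of a graph. -/
noncomputable def gdiam (G : SimpleGraph V) [Fintype V] : ℕ :=
  Finset.univ.sup (ecc G)

/-- The center of a graph: vertices of minimum eccentricity. -/
noncomputable def gcenter (G : SimpleGraph V) [Fintype V] : Set V :=
  {v | ecc G v = grad G}

/-- Distance from a vertex to a set of vertices. -/
noncomputable def distS (G : SimpleGraph V) (v : V) (S : Set V) : ℕ :=
  sInf (G.dist v '' S)

/-- The metric projection of a vertex onto a set of vertices. -/
noncomputable def proj (G : SimpleGraph V) (v : V) (S : Set V) : Set V :=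
  {s ∈ S | G.dist v s = distS G v S}

/-- The slice `L(u,k,v)`: vertices on the metric interval from `u` to `v`
at distance `k` from `u`. -/
def gslice (G : SimpleGraph V) (u : V) (k : ℕ) (v : V) : Set V :=
  {w | G.dist u w = k ∧ G.dist u w + G.dist w v = G.dist u v}

/-- A graph is `C₄`-free if it has no induced cycle on four vertices. -/
def C4Free (G : SimpleGraph V) : Prop :=
  ¬ ∃ a b c d : V, a ≠ b ∧ a ≠ c ∧ a ≠ d ∧ b ≠ c ∧ b ≠ d ∧ c ≠ d ∧
    G.Adj a b ∧ G.Adj b c ∧ G.Adj c d ∧ G.Adj d a ∧ ¬ G.Adj a c ∧ ¬ G.Adj b d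

/-- The open neighbourhood of a set: vertices outside it with a neighbour in it. -/
def nbhdSet (G : SimpleGraph V) (C : Set V) : Set V :=
  {v | v ∉ C ∧ ∃ c ∈ C, G.Adj v c}

/-! With `r = n + 3` we have `d(u,w) = 2n+3`, `diam = 2n+5` and `A = L(w, n+1, u)`.
Helly applied to `N^{n+1}[w]`, `N^{n+2}[u]` and a ball around a vertex shows that every vertex
has a point of `A` within `n+2` (a gate), and `A` is a clique: two of its vertices at distance 2
would have common neighbours one level closer to `u` and one level closer to `w`, an induced `C₄`.
If `d(x,y) = 2n+5`, a point of `A` within `n+1` of `x`, the clique edge and the gate of `y` would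
give `d(x,y) ≤ 2n+4`; this yields `d(x,A) = n+2`, disjoint projections and, with the mirror slice
`L(u, n+1, w)`, `d(x,w) = d(x,u) = 2n+3`. Conversely, if `d(x,y) ≤ 2n+4`, the balls
`N^{n+2}[x]`, `N^{n+2}[y]`, `N^{n+2}[u]`, `N^{n+1}[w]` meet in a point of `A` lying in both
projections. -/

namespace SimpleGraph

variable {G : SimpleGraph V}

lemma Connected.exists_dist_le_dist_le (hconn : G.Connected) {a b : V} {p q : ℕ}
    (h : G.dist a b ≤ p + q) : ∃ z, G.dist a z ≤ p ∧ G.dist z b ≤ q := by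
  obtain ⟨W, hW⟩ := hconn.exists_walk_length_eq_dist a b
  refine ⟨W.getVert p, (dist_le (W.take p)).trans ?_, (dist_le (W.drop p)).trans ?_⟩ <;>
    simp only [Walk.take_length, Walk.drop_length] <;> omega

lemma Connected.adj_of_dist_le_one (hconn : G.Connected) {a b : V}
    (h : G.dist a b ≤ 1) (hne : a ≠ b) : G.Adj a b :=
  dist_eq_one_iff_adj.mp (le_antisymm h (hconn.pos_dist_of_ne hne))

end SimpleGraph

open SimpleGraph

section Slices

variable {G : SimpleGraph V}

lemma C4Free.adj_of_common_neighbors (hC4 : C4Free G) {a b c d : V} (hac : a ≠ c) (hbd : b ≠ d)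
    (hnac : ¬ G.Adj a c) (hab : G.Adj a b) (hbc : G.Adj b c) (hcd : G.Adj c d)
    (hda : G.Adj d a) : G.Adj b d := by
  by_contra hnbd
  exact hC4 ⟨a, b, c, d, hab.ne, hac, hda.ne.symm, hbc.ne, hbd, hcd.ne,
    hab, hbc, hcd, hda, hnac, hnbd⟩

lemma IsHelly.exists_forall_dist_le (hH : IsHelly G) (hconn : G.Connected) {ι : Type*}
    [Nonempty ι] (c : ι → V) (ρ : ι → ℕ) (h : ∀ i j, G.dist (c i) (c j) ≤ ρ i + ρ j) :
    ∃ z, ∀ i, G.dist (c i) z ≤ ρ i := by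
  have hpair : ∀ p ∈ Set.range (fun i => (c i, ρ i)), ∀ q ∈ Set.range (fun i => (c i, ρ i)),
      (gBall G p.1 p.2 ∩ gBall G q.1 q.2).Nonempty := by
    rintro _ ⟨i, rfl⟩ _ ⟨j, rfl⟩
    obtain ⟨z, hiz, hzj⟩ := hconn.exists_dist_le_dist_le (h i j)
    exact ⟨z, hiz, by rwa [gBall, Set.mem_ofPred_eq, SimpleGraph.dist_comm]⟩
  obtain ⟨z, hz⟩ := hH _ (Set.range_nonempty _) hpair
  exact ⟨z, fun i => Set.mem_iInter₂.mp hz _ ⟨i, rfl⟩⟩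

lemma mem_gslice_of_dist_le (hconn : G.Connected) {w u z : V} {k m : ℕ}
    (hwu : G.dist w u = k + m) (hwz : G.dist w z ≤ k) (huz : G.dist u z ≤ m) :
    z ∈ gslice G w k u := by
  have := hconn.dist_triangle (u := w) (v := z) (w := u)
  have hzu : G.dist z u = G.dist u z := SimpleGraph.dist_comm
  exact ⟨by omega, by omega⟩

/-- As `dist w u = k + m`, the slice `L(w,k,u)` is `N^k[w] ∩ N^m[u]`, so this is Helly for four
balls. -/
lemma IsHelly.exists_mem_gslice (hH : IsHelly G) (hconn : G.Connected) {w u v₁ v₂ : V}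
    {k m τ₁ τ₂ : ℕ} (hwu : G.dist w u = k + m) (h₁₂ : G.dist v₁ v₂ ≤ τ₁ + τ₂)
    (hw₁ : G.dist w v₁ ≤ k + τ₁) (hu₁ : G.dist u v₁ ≤ m + τ₁)
    (hw₂ : G.dist w v₂ ≤ k + τ₂) (hu₂ : G.dist u v₂ ≤ m + τ₂) :
    ∃ z ∈ gslice G w k u, G.dist v₁ z ≤ τ₁ ∧ G.dist v₂ z ≤ τ₂ := by
  obtain ⟨z, hz⟩ := hH.exists_forall_dist_le hconn ![w, u, v₁, v₂] ![k, m, τ₁, τ₂] (by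
    intro i j
    fin_cases i <;> fin_cases j <;>
      simp only [Fin.zero_eta, Fin.mk_one, Fin.reduceFinMk, Fin.isValue, Matrix.cons_val,
        Matrix.cons_val_zero, Matrix.cons_val_one, SimpleGraph.dist_self, zero_le] <;>
      first | omega | (rw [SimpleGraph.dist_comm]; omega))
  exact ⟨z, mem_gslice_of_dist_le hconn hwu (hz 0) (hz 1), hz 2, hz 3⟩

lemma gslice_dist_ne_two (hH : IsHelly G) (hconn : G.Connected) (hC4 : C4Free G) {w u p q : V}
    {k m : ℕ} (hwu : G.dist w u = k + 1 + (m + 1)) (hp : p ∈ gslice G w (k + 1) u)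
    (hq : q ∈ gslice G w (k + 1) u) : G.dist p q ≠ 2 := by
  intro hpq
  obtain ⟨hwp, hpu⟩ := hp
  obtain ⟨hwq, hqu⟩ := hq
  have hup : G.dist u p = G.dist p u := SimpleGraph.dist_comm
  have huq : G.dist u q = G.dist q u := SimpleGraph.dist_comm
  obtain ⟨z₁, ⟨hwz₁, -⟩, hpz₁, hqz₁⟩ := hH.exists_mem_gslice hconn (w := w) (u := u)
    (v₁ := p) (v₂ := q) (k := k + 2) (m := m) (τ₁ := 1) (τ₂ := 1)
    (by omega) (by omega) (by omega) (by omega) (by omega) (by omega)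
  obtain ⟨z₂, ⟨hwz₂, -⟩, hpz₂, hqz₂⟩ := hH.exists_mem_gslice hconn (w := w) (u := u)
    (v₁ := p) (v₂ := q) (k := k) (m := m + 2) (τ₁ := 1) (τ₂ := 1)
    (by omega) (by omega) (by omega) (by omega) (by omega) (by omega)
  have hne : ∀ {a b : V}, G.dist w a ≠ G.dist w b → a ≠ b := fun h hab => h (hab ▸ rfl)
  have hz₁z₂ : G.Adj z₁ z₂ :=
    hC4.adj_of_common_neighbors (a := p) (c := q) (by rintro rfl; simp at hpq) (hne (by omega))
      (fun h => by rw [dist_eq_one_iff_adj.mpr h] at hpq; omega)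
      (hconn.adj_of_dist_le_one hpz₁ (hne (by omega)))
      (hconn.adj_of_dist_le_one (by rwa [SimpleGraph.dist_comm]) (hne (by omega)))
      (hconn.adj_of_dist_le_one hqz₂ (hne (by omega)))
      (hconn.adj_of_dist_le_one (by rwa [SimpleGraph.dist_comm]) (hne (by omega)))
  have := hconn.dist_triangle (u := w) (v := z₂) (w := z₁)
  rw [SimpleGraph.dist_comm (u := z₂), dist_eq_one_iff_adj.mpr hz₁z₂] at this
  omega

lemma gslice_dist_le_one (hH : IsHelly G) (hconn : G.Connected) (hC4 : C4Free G) {w u p q : V}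
    {k m : ℕ} (hwu : G.dist w u = k + 1 + (m + 1)) (hp : p ∈ gslice G w (k + 1) u)
    (hq : q ∈ gslice G w (k + 1) u) : G.dist p q ≤ 1 := by
  induction hj : G.dist p q using Nat.strong_induction_on generalizing p with
  | _ j ih =>
    by_contra! hj1
    obtain ⟨hwp, hpu⟩ := hp
    obtain ⟨hwq, hqu⟩ := hq
    have hup : G.dist u p = G.dist p u := SimpleGraph.dist_comm
    have huq : G.dist u q = G.dist q u := SimpleGraph.dist_comm
    have hwq' : G.dist w q ≤ k + 1 + (j - 1) := by omega
    obtain ⟨z, hz, hpz, hzq⟩ := hH.exists_mem_gslice hconn (v₁ := p) (v₂ := q) (k := k + 1)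
      (m := m + 1) (τ₁ := 1) (τ₂ := j - 1) hwu (by omega) (by omega) (by omega) hwq' (by omega)
    rw [SimpleGraph.dist_comm] at hzq
    have hzq1 := ih _ (by omega) hz rfl
    have := hconn.dist_triangle (u := p) (v := z) (w := q)
    exact gslice_dist_ne_two hH hconn hC4 hwu ⟨hwp, hpu⟩ ⟨hwq, hqu⟩ (by omega)

lemma distS_le {v s : V} {S : Set V} (hs : s ∈ S) : distS G v S ≤ G.dist v s :=
  Nat.sInf_le ⟨s, hs, rfl⟩

lemma le_distS {v : V} {S : Set V} {d : ℕ} (hS : S.Nonempty) (h : ∀ s ∈ S, d ≤ G.dist v s) :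
    d ≤ distS G v S :=
  le_csInf (hS.image _) (by rintro _ ⟨s, hs, rfl⟩; exact h s hs)

lemma mem_proj_of_dist_le {v s : V} {S : Set V} (hs : s ∈ S) (h : G.dist v s ≤ distS G v S) :
    s ∈ proj G v S :=
  ⟨hs, le_antisymm h (distS_le hs)⟩

end Slices

section Eccentricity

variable {G : SimpleGraph V} [Fintype V]

lemma dist_le_ecc (v x : V) : G.dist v x ≤ ecc G v :=
  Finset.le_sup (Finset.mem_univ x)

lemma ecc_le_gdiam (v : V) : ecc G v ≤ gdiam G :=
  Finset.le_sup (Finset.mem_univ v)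

lemma grad_le_ecc (v : V) : grad G ≤ ecc G v :=
  Nat.sInf_le ⟨v, rfl⟩

variable {u w : V} {n : ℕ}

lemma exists_mem_gslice_dist_le_of_ecc_le (hH : IsHelly G) (hconn : G.Connected)
    (hu : ecc G u ≤ 2 * n + 3) (hwu : G.dist w u = 2 * n + 3) {v : V} {τ : ℕ}
    (hτ : n + 1 ≤ τ) (hwv : G.dist w v ≤ n + 1 + τ) :
    ∃ z ∈ gslice G w (n + 1) u, G.dist v z ≤ τ := by
  have huv := dist_le_ecc (G := G) u v
  obtain ⟨z, hz, hvz, -⟩ := hH.exists_mem_gslice hconn (w := w) (u := u) (v₁ := v) (v₂ := v)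
    (k := n + 1) (m := n + 2) (τ₁ := τ) (τ₂ := τ) (by omega) (by simp) hwv (by omega) hwv
    (by omega)
  exact ⟨z, hz, hvz⟩

lemma le_dist_of_mem_gslice_of_dist_eq (hH : IsHelly G) (hconn : G.Connected) (hC4 : C4Free G)
    (hu : ecc G u ≤ 2 * n + 3) (hw : ecc G w ≤ 2 * n + 3) (hwu : G.dist w u = 2 * n + 3)
    {x y m : V} (hxy : G.dist x y = 2 * n + 5) (hm : m ∈ gslice G w (n + 1) u) :
    n + 2 ≤ G.dist x m := by
  have hwy := dist_le_ecc (G := G) w y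
  obtain ⟨m', hm', hym'⟩ :=
    exists_mem_gslice_dist_le_of_ecc_le hH hconn hu hwu (v := y) (τ := n + 2) (by omega)
      (by omega)
  have hmm' := gslice_dist_le_one hH hconn hC4 (k := n) (m := n + 1) (by omega) hm hm'
  have := hconn.dist_triangle (u := x) (v := m) (w := y)
  have := hconn.dist_triangle (u := m) (v := m') (w := y)
  rw [SimpleGraph.dist_comm (u := m')] at this
  omega

lemma dist_eq_of_dist_eq_add_two (hH : IsHelly G) (hconn : G.Connected) (hC4 : C4Free G)
    (hu : ecc G u ≤ 2 * n + 3) (hw : ecc G w ≤ 2 * n + 3) (hwu : G.dist w u = 2 * n + 3)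
    {x y : V} (hxy : G.dist x y = 2 * n + 5) : G.dist w x = 2 * n + 3 := by
  have hwx := dist_le_ecc (G := G) w x
  by_contra hne
  obtain ⟨z, hz, hxz⟩ :=
    exists_mem_gslice_dist_le_of_ecc_le hH hconn hu hwu (v := x) (τ := n + 1) le_rfl (by omega)
  have := le_dist_of_mem_gslice_of_dist_eq hH hconn hC4 hu hw hwu hxy hz
  omega

lemma distS_gslice_eq_of_dist_eq (hH : IsHelly G) (hconn : G.Connected) (hC4 : C4Free G)
    (hu : ecc G u ≤ 2 * n + 3) (hw : ecc G w ≤ 2 * n + 3) (hwu : G.dist w u = 2 * n + 3)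
    {x y : V} (hxy : G.dist x y = 2 * n + 5) : distS G x (gslice G w (n + 1) u) = n + 2 := by
  have hwx := dist_le_ecc (G := G) w x
  obtain ⟨z, hz, hxz⟩ :=
    exists_mem_gslice_dist_le_of_ecc_le hH hconn hu hwu (v := x) (τ := n + 2) (by omega)
      (by omega)
  exact le_antisymm ((distS_le hz).trans hxz)
    (le_distS ⟨z, hz⟩ fun m hm => le_dist_of_mem_gslice_of_dist_eq hH hconn hC4 hu hw hwu hxy hm)

end Eccentricity

/-- In a finite connected C4-free Helly graph of radius `r`, if `u, w`
are mutually far apart with `dist(u,w) = diam(G) − 2 = 2r − 3` and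
`A = L(w, r−2, u)`, then `(x,y)` is a diametral pair iff
`dist(x,A) = dist(y,A) = r − 1`, `Pr(x,A) ∩ Pr(y,A) = ∅`, and
`dist(y,u) = dist(y,w) = dist(x,u) = dist(x,w) = 2r − 3`. -/
theorem stmt12 (G : SimpleGraph V) [Fintype V] (hconn : G.Connected) (hH : IsHelly G)
    (hC4 : C4Free G) (u w : V)
    (hu : ecc G u = G.dist u w) (hw : ecc G w = G.dist u w)
    (hd : G.dist u w + 2 = gdiam G) (hr : G.dist u w + 3 = 2 * grad G) :
    ∀ x y : V, G.dist x y = gdiam G ↔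
      (distS G x (gslice G w (grad G - 2) u) = grad G - 1 ∧
       distS G y (gslice G w (grad G - 2) u) = grad G - 1 ∧
       proj G x (gslice G w (grad G - 2) u) ∩ proj G y (gslice G w (grad G - 2) u) = ∅ ∧
       G.dist y u = 2 * grad G - 3 ∧ G.dist y w = 2 * grad G - 3 ∧
       G.dist x u = 2 * grad G - 3 ∧ G.dist x w = 2 * grad G - 3) := by
  intro x y
  have hgrad := grad_le_ecc (G := G) u
  obtain ⟨n, hn⟩ : ∃ n, grad G = n + 3 := ⟨grad G - 3, by omega⟩
  have hwu : G.dist w u = 2 * n + 3 := by rw [SimpleGraph.dist_comm]; omega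
  have huw : G.dist u w = 2 * n + 3 := by omega
  have hu' : ecc G u ≤ 2 * n + 3 := by omega
  have hw' : ecc G w ≤ 2 * n + 3 := by omega
  rw [show gdiam G = 2 * n + 5 by omega, hn, show n + 3 - 2 = n + 1 by omega,
    show n + 3 - 1 = n + 2 by omega, show 2 * (n + 3) - 3 = 2 * n + 3 by omega]
  constructor
  · intro hxy
    have hyx : G.dist y x = 2 * n + 5 := by rw [SimpleGraph.dist_comm]; exact hxy
    have hSx := distS_gslice_eq_of_dist_eq hH hconn hC4 hu' hw' hwu hxy
    have hSy := distS_gslice_eq_of_dist_eq hH hconn hC4 hu' hw' hwu hyx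
    refine ⟨hSx, hSy, ?_, ?_, ?_, ?_, ?_⟩
    · refine Set.eq_empty_iff_forall_notMem.mpr fun p ⟨⟨_, hxp⟩, ⟨_, hyp⟩⟩ => ?_
      have := hconn.dist_triangle (u := x) (v := p) (w := y)
      rw [SimpleGraph.dist_comm (u := p)] at this
      omega
    all_goals rw [SimpleGraph.dist_comm]
    · exact dist_eq_of_dist_eq_add_two hH hconn hC4 hw' hu' huw hyx
    · exact dist_eq_of_dist_eq_add_two hH hconn hC4 hu' hw' hwu hyx
    · exact dist_eq_of_dist_eq_add_two hH hconn hC4 hw' hu' huw hxy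
    · exact dist_eq_of_dist_eq_add_two hH hconn hC4 hu' hw' hwu hxy
  · rintro ⟨hSx, hSy, hdisj, hyu, hyw, hxu, hxw⟩
    by_contra hne
    have hxy := (dist_le_ecc (G := G) x y).trans (ecc_le_gdiam x)
    rw [SimpleGraph.dist_comm] at hyu hyw hxu hxw
    obtain ⟨z, hz, hxz, hyz⟩ := hH.exists_mem_gslice hconn (w := w) (u := u) (v₁ := x)
      (v₂ := y) (k := n + 1) (m := n + 2) (τ₁ := n + 2) (τ₂ := n + 2)
      (by omega) (by omega) (by omega) (by omega) (by omega) (by omega)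
    exact Set.eq_empty_iff_forall_notMem.mp hdisj z
      ⟨mem_proj_of_dist_le hz (hSx ▸ hxz), mem_proj_of_dist_le hz (hSy ▸ hyz)⟩
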